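/- Let D : [0,1] × [0,∞) → ℝ be twice continuously differentiable in r, with constants m > 0, M ≥ 0, D_m ≥ 0 such that D(r,t) ≥ m, |∂²D/∂r²(r,t)| ≤ M, and max{0, −(D(1,t) + ∂D/∂r(1,t))/2} ≤ D_m for all r, t, and let μ < −(M/2 + D_m²/m). Let w be a classical solution of the target system, and let p be a kernel on the triangle T = {(r,s) : 0 ≤ r ≤ s ≤ 1} with |p(r,s,t)| ≤ P for all (r,s) ∈ T and t ≥ 0. Define c̃(r,t) = w(r,t) − ∫ᵣ¹ p(r,s,t) w(s,t) ds. Then for all t ≥ 0, (∫₀¹ c̃(r,t)² dr)^{1/2} ≤ (1 + P) · exp((μ + M/2 + D_m²/m) t) · (∫₀¹ w(r,0)² dr)^{1/2}, and the exponential rate μ + M/2 + D_m²/m is negative; in particular ∥c̃(·,t)∥_{L²(0,1)} → 0 exponentially as t → ∞. -/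

import Mathlib

/-!
The energy `E(t) = ∫₀¹ w²` satisfies `E' = 2 ∫ w w_t ≤ 2α E` with `α = μ + M/2 + D_m²/m`:
integrating `∫ w D w_rr` by parts twice leaves `-∫ D w_r² + ½ ∫ D_rr w²` and the boundary term
`-(D + D_r)(1) w(1)² / 2 ≤ D_m w(1)² = 2 D_m ∫ w w_r`, which Young's inequality absorbs into
`m ∫ w_r² ≤ ∫ D w_r²`. Hence `E(t) ≤ e^{2αt} E(0)`. Pointwise `|c̃| ≤ |w| + P ‖w‖_{L¹}`, and
`‖w‖_{L¹} ≤ ‖w‖_{L²}` on `[0,1]`, so `‖c̃‖_{L²} ≤ (1 + P) ‖w‖_{L²}`.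
-/

open MeasureTheory intervalIntegral Set Real Filter

theorem integral_eq_sub_of_hasDerivWithinAt_Icc {u u' : ℝ → ℝ} {a b : ℝ} (hab : a ≤ b)
    (hu : ∀ x ∈ Icc a b, HasDerivWithinAt u (u' x) (Icc a b) x)
    (hu' : ContinuousOn u' (Icc a b)) :
    ∫ x in a..b, u' x = u b - u a :=
  integral_eq_sub_of_hasDerivAt_of_le hab (fun x hx => (hu x hx).continuousWithinAt)
    (fun x hx => (hu x (Ioo_subset_Icc_self hx)).hasDerivAt (Icc_mem_nhds hx.1 hx.2))
    (hu'.intervalIntegrable_of_Icc hab)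

theorem continuousOn_of_forall_hasDerivWithinAt {f f' : ℝ → ℝ} {s : Set ℝ}
    (hf : ∀ x ∈ s, HasDerivWithinAt f (f' x) s x) : ContinuousOn f s :=
  fun x hx => (hf x hx).continuousWithinAt

theorem integral_diffusion_boundary_form_nonpos {D Dr Drr w wr wrr : ℝ → ℝ} {Dm : ℝ}
    (hD : ∀ r ∈ Icc (0:ℝ) 1, HasDerivWithinAt D (Dr r) (Icc 0 1) r)
    (hDr : ∀ r ∈ Icc (0:ℝ) 1, HasDerivWithinAt Dr (Drr r) (Icc 0 1) r)
    (hw : ∀ r ∈ Icc (0:ℝ) 1, HasDerivWithinAt w (wr r) (Icc 0 1) r)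
    (hwr : ∀ r ∈ Icc (0:ℝ) 1, HasDerivWithinAt wr (wrr r) (Icc 0 1) r)
    (hDrr_cont : ContinuousOn Drr (Icc 0 1)) (hwrr_cont : ContinuousOn wrr (Icc 0 1))
    (hDm : -((D 1 + Dr 1) / 2) ≤ Dm) (hBC0 : w 0 = 0) (hBC1 : wr 1 = -(1/2) * w 1) :
    ∫ r in (0:ℝ)..1,
      (D r * wr r ^ 2 + w r * (D r * wrr r) - Drr r * w r ^ 2 / 2 - 2 * Dm * (w r * wr r)) ≤ 0 := by
  set H : ℝ → ℝ := fun r => D r * w r * wr r - Dr r * w r ^ 2 / 2 - Dm * w r ^ 2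
  have hH : ∀ r ∈ Icc (0:ℝ) 1, HasDerivWithinAt H
      (D r * wr r ^ 2 + w r * (D r * wrr r) - Drr r * w r ^ 2 / 2 - 2 * Dm * (w r * wr r))
      (Icc 0 1) r := fun r hr =>
    ((((hD r hr).mul (hw r hr)).mul (hwr r hr)).sub (((hDr r hr).mul ((hw r hr).pow 2)).div_const 2)
      |>.sub (((hw r hr).pow 2).const_mul Dm)).congr_deriv
        (by simp only [Pi.mul_apply, Pi.pow_apply]; ring)
  have hH1 : H 1 = (-((D 1 + Dr 1) / 2) - Dm) * w 1 ^ 2 := by simp only [H, hBC1]; ring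
  have := continuousOn_of_forall_hasDerivWithinAt hD
  have := continuousOn_of_forall_hasDerivWithinAt hDr
  have := continuousOn_of_forall_hasDerivWithinAt hw
  have := continuousOn_of_forall_hasDerivWithinAt hwr
  rw [integral_eq_sub_of_hasDerivWithinAt_Icc zero_le_one hH (by fun_prop)]
  simpa [H, hBC0, hH1] using
    mul_nonpos_of_nonpos_of_nonneg (by linarith : -((D 1 + Dr 1) / 2) - Dm ≤ 0) (sq_nonneg (w 1))

theorem target_system_energy_estimate {D Dr Drr w wr wrr wt : ℝ → ℝ} {m M Dm μ : ℝ}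
    (hD : ∀ r ∈ Icc (0:ℝ) 1, HasDerivWithinAt D (Dr r) (Icc 0 1) r)
    (hDr : ∀ r ∈ Icc (0:ℝ) 1, HasDerivWithinAt Dr (Drr r) (Icc 0 1) r)
    (hw : ∀ r ∈ Icc (0:ℝ) 1, HasDerivWithinAt w (wr r) (Icc 0 1) r)
    (hwr : ∀ r ∈ Icc (0:ℝ) 1, HasDerivWithinAt wr (wrr r) (Icc 0 1) r)
    (hDrr_cont : ContinuousOn Drr (Icc 0 1)) (hwrr_cont : ContinuousOn wrr (Icc 0 1))
    (hm : 0 < m) (hD_ge : ∀ r ∈ Icc (0:ℝ) 1, m ≤ D r) (hDrr_le : ∀ r ∈ Icc (0:ℝ) 1, |Drr r| ≤ M)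
    (hDm : -((D 1 + Dr 1) / 2) ≤ Dm)
    (hPDE : ∀ r ∈ Icc (0:ℝ) 1, wt r = D r * wrr r + μ * w r)
    (hBC0 : w 0 = 0) (hBC1 : wr 1 = -(1/2) * w 1) :
    ∫ r in (0:ℝ)..1, w r * wt r ≤ (μ + M / 2 + Dm ^ 2 / m) * ∫ r in (0:ℝ)..1, w r ^ 2 := by
  set B : ℝ → ℝ := fun r =>
    D r * wr r ^ 2 + w r * (D r * wrr r) - Drr r * w r ^ 2 / 2 - 2 * Dm * (w r * wr r)
  have hpointwise : ∀ r ∈ Icc (0:ℝ) 1, w r * wt r ≤ B r + (μ + M / 2 + Dm ^ 2 / m) * w r ^ 2 := by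
    intro r hr
    have hyoung : 0 ≤ (m * wr r - Dm * w r) ^ 2 / m := by positivity
    have hDwr : m * wr r ^ 2 ≤ D r * wr r ^ 2 :=
      mul_le_mul_of_nonneg_right (hD_ge r hr) (sq_nonneg _)
    have hM : Drr r * w r ^ 2 ≤ M * w r ^ 2 :=
      mul_le_mul_of_nonneg_right ((le_abs_self _).trans (hDrr_le r hr)) (sq_nonneg _)
    rw [hPDE r hr]
    simp only [B]
    field_simp at hyoung ⊢
    nlinarith
  have := continuousOn_of_forall_hasDerivWithinAt hD
  have := continuousOn_of_forall_hasDerivWithinAt hDr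
  have := continuousOn_of_forall_hasDerivWithinAt hw
  have := continuousOn_of_forall_hasDerivWithinAt hwr
  have hwt_cont : ContinuousOn wt (Icc 0 1) :=
    (by fun_prop : ContinuousOn (fun r => D r * wrr r + μ * w r) _).congr hPDE
  have hB : IntervalIntegrable B volume 0 1 := by
    refine ContinuousOn.intervalIntegrable_of_Icc zero_le_one ?_; simp only [B]; fun_prop
  have hw_sq : IntervalIntegrable (fun r => w r ^ 2) volume 0 1 := by
    refine ContinuousOn.intervalIntegrable_of_Icc zero_le_one ?_; fun_prop
  calc ∫ r in (0:ℝ)..1, w r * wt r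
      ≤ ∫ r in (0:ℝ)..1, (B r + (μ + M / 2 + Dm ^ 2 / m) * w r ^ 2) := by
        refine integral_mono_on zero_le_one ?_ (hB.add (hw_sq.const_mul _)) hpointwise
        exact ContinuousOn.intervalIntegrable_of_Icc zero_le_one (by fun_prop)
    _ = (∫ r in (0:ℝ)..1, B r) + (μ + M / 2 + Dm ^ 2 / m) * ∫ r in (0:ℝ)..1, w r ^ 2 := by
        rw [integral_add hB (hw_sq.const_mul _), intervalIntegral.integral_const_mul]
    _ ≤ (μ + M / 2 + Dm ^ 2 / m) * ∫ r in (0:ℝ)..1, w r ^ 2 := by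
        linarith [integral_diffusion_boundary_form_nonpos hD hDr hw hwr hDrr_cont hwrr_cont hDm
          hBC0 hBC1]

theorem continuousOn_intervalIntegral_of_continuousOn_prod {F : ℝ → ℝ → ℝ} {a b : ℝ}
    (hab : a ≤ b) (hF : ContinuousOn (fun q : ℝ × ℝ => F q.1 q.2) (Icc a b ×ˢ Ici 0)) :
    ContinuousOn (fun t => ∫ r in a..b, F r t) (Ici 0) := by
  -- Extend `F` continuously to the whole plane by projecting onto `[a, b] × [0, ∞)`.
  set G : ℝ → ℝ → ℝ := fun t r => F (projIcc a b hab r) (max t 0)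
  have hproj : Continuous fun q : ℝ × ℝ => ((projIcc a b hab q.2 : ℝ), max q.1 0) :=
    ((continuous_subtype_val.comp (continuous_projIcc (h := hab))).comp continuous_snd).prodMk
      (continuous_fst.max continuous_const)
  have hG : Continuous (Function.uncurry G) :=
    hF.comp_continuous hproj fun q => ⟨(projIcc a b hab q.2).2, le_max_right q.1 0⟩
  refine (continuous_parametric_intervalIntegral_of_continuous' hG a b).continuousOn.congr
    fun t ht => integral_congr fun r hr => ?_
  rw [uIcc_of_le hab] at hr
  simp [G, projIcc_of_mem hab hr, max_eq_left (show (0:ℝ) ≤ t from ht)]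

theorem hasDerivAt_intervalIntegral_of_continuousOn_prod {F F' : ℝ → ℝ → ℝ} {a b t₀ : ℝ}
    (hab : a ≤ b) (ht₀ : 0 < t₀)
    (hF : ContinuousOn (fun q : ℝ × ℝ => F q.1 q.2) (Icc a b ×ˢ Ici 0))
    (hF' : ContinuousOn (fun q : ℝ × ℝ => F' q.1 q.2) (Icc a b ×ˢ Ici 0))
    (hderiv : ∀ r ∈ Icc a b, ∀ t > 0, HasDerivAt (F r) (F' r t) t) :
    HasDerivAt (fun t => ∫ r in a..b, F r t) (∫ r in a..b, F' r t₀) t₀ := by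
  have hsub : Icc a b ×ˢ Icc 0 (2 * t₀) ⊆ Icc a b ×ˢ Ici 0 :=
    prod_mono subset_rfl Icc_subset_Ici_self
  obtain ⟨C, hC⟩ := (isCompact_Icc.prod isCompact_Icc).exists_bound_of_continuousOn (hF'.mono hsub)
  have hball : ∀ t ∈ Metric.ball t₀ t₀, 0 < t ∧ t ≤ 2 * t₀ := fun t ht => by
    rw [Real.ball_eq_Ioo] at ht; constructor <;> linarith [ht.1, ht.2]
  have hIoc : ∀ r ∈ uIoc a b, r ∈ Icc a b := fun r hr => by
    rw [uIoc_of_le hab] at hr; exact Ioc_subset_Icc_self hr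
  have hslice {f : ℝ → ℝ → ℝ} (hf : ContinuousOn (fun q : ℝ × ℝ => f q.1 q.2) (Icc a b ×ˢ Ici 0))
      {t : ℝ} (ht : 0 ≤ t) : IntervalIntegrable (fun r => f r t) volume a b :=
    (hf.uncurry_right t ht).intervalIntegrable_of_Icc hab
  refine (hasDerivAt_integral_of_dominated_loc_of_deriv_le (F := fun t r => F r t)
    (F' := fun t r => F' r t) (bound := fun _ => C) (Metric.ball_mem_nhds t₀ ht₀) ?_
    (hslice hF ht₀.le) (hslice hF' ht₀.le).def'.aestronglyMeasurable ?_
    intervalIntegrable_const ?_).2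
  · filter_upwards [eventually_gt_nhds ht₀] with t ht
    exact (hslice hF ht.le).def'.aestronglyMeasurable
  · exact ae_of_all _ fun r hr t ht =>
      hC (r, t) ⟨hIoc r hr, (hball t ht).1.le, (hball t ht).2⟩
  · exact ae_of_all _ fun r hr t ht => hderiv r (hIoc r hr) t (hball t ht).1

theorem le_exp_mul_mul_of_hasDerivAt_le {f f' : ℝ → ℝ} {K t : ℝ}
    (hf : ContinuousOn f (Ici 0)) (hderiv : ∀ s > 0, HasDerivAt f (f' s) s)
    (hbound : ∀ s > 0, f' s ≤ K * f s) (ht : 0 ≤ t) :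
    f t ≤ exp (K * t) * f 0 := by
  set g : ℝ → ℝ := fun s => exp (-K * s) * f s
  have hg : ∀ s > 0, HasDerivAt g (exp (-K * s) * (f' s - K * f s)) s := fun s hs =>
    (((hasDerivAt_id s).const_mul (-K)).exp.mul (hderiv s hs)).congr_deriv (by simp; ring)
  have hanti : AntitoneOn g (Ici 0) := by
    refine antitoneOn_of_deriv_nonpos (convex_Ici 0) (by fun_prop) ?_ ?_ <;> rw [interior_Ici]
    · exact fun s hs => (hg s hs).differentiableAt.differentiableWithinAt
    · intro s hs
      rw [(hg s hs).deriv]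
      exact mul_nonpos_of_nonneg_of_nonpos (exp_pos _).le (by linarith [hbound s hs])
  have := hanti self_mem_Ici ht ht
  simp only [g, mul_zero, exp_zero, one_mul] at this
  calc f t = exp (K * t) * (exp (-K * t) * f t) := by
        rw [← mul_assoc, ← exp_add, neg_mul, add_neg_cancel, exp_zero, one_mul]
    _ ≤ exp (K * t) * f 0 := by gcongr

theorem sqrt_integral_sq_le_exp_mul_of_energy_le {w wt : ℝ → ℝ → ℝ} {α t : ℝ}
    (hwt : ∀ r ∈ Icc (0:ℝ) 1, ∀ t ∈ Ici (0:ℝ),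
      HasDerivWithinAt (fun τ => w r τ) (wt r t) (Ici 0) t)
    (hw_cont : ContinuousOn (fun q : ℝ × ℝ => w q.1 q.2) (Icc 0 1 ×ˢ Ici 0))
    (hwt_cont : ContinuousOn (fun q : ℝ × ℝ => wt q.1 q.2) (Icc 0 1 ×ˢ Ici 0))
    (henergy : ∀ s > 0, ∫ r in (0:ℝ)..1, w r s * wt r s ≤ α * ∫ r in (0:ℝ)..1, w r s ^ 2)
    (ht : 0 ≤ t) :
    √(∫ r in (0:ℝ)..1, w r t ^ 2) ≤ exp (α * t) * √(∫ r in (0:ℝ)..1, w r 0 ^ 2) := by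
  have hw_sq : ContinuousOn (fun q : ℝ × ℝ => w q.1 q.2 ^ 2) (Icc 0 1 ×ˢ Ici 0) := hw_cont.pow 2
  have hw_wt : ContinuousOn (fun q : ℝ × ℝ => 2 * (w q.1 q.2 * wt q.1 q.2)) (Icc 0 1 ×ˢ Ici 0) :=
    continuousOn_const.mul (hw_cont.mul hwt_cont)
  have hdecay : ∫ r in (0:ℝ)..1, w r t ^ 2 ≤ exp (2 * α * t) * ∫ r in (0:ℝ)..1, w r 0 ^ 2 := by
    refine le_exp_mul_mul_of_hasDerivAt_le (f' := fun s => ∫ r in (0:ℝ)..1, 2 * (w r s * wt r s))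
      (continuousOn_intervalIntegral_of_continuousOn_prod (F := fun r s => w r s ^ 2)
        zero_le_one hw_sq) (fun s hs => ?_) (fun s hs => ?_) ht
    · refine hasDerivAt_intervalIntegral_of_continuousOn_prod (F := fun r s => w r s ^ 2)
        (F' := fun r s => 2 * (w r s * wt r s)) zero_le_one hs hw_sq hw_wt fun r hr τ hτ => ?_
      exact (((hwt r hr τ hτ.le).hasDerivAt (Ici_mem_nhds hτ)).pow 2).congr_deriv (by ring)
    · simp only [intervalIntegral.integral_const_mul]
      linarith [henergy s hs]
  have hexp : exp (2 * α * t) = exp (α * t) ^ 2 := by rw [← exp_nat_mul]; push_cast; ring_nf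
  calc √(∫ r in (0:ℝ)..1, w r t ^ 2)
      ≤ √(exp (α * t) ^ 2 * ∫ r in (0:ℝ)..1, w r 0 ^ 2) := sqrt_le_sqrt (hexp ▸ hdecay)
    _ = exp (α * t) * √(∫ r in (0:ℝ)..1, w r 0 ^ 2) := by
      rw [sqrt_mul (sq_nonneg _), sqrt_sq (exp_pos _).le]

theorem sq_intervalIntegral_le_integral_sq {f : ℝ → ℝ} (hf : ContinuousOn f (Icc 0 1)) :
    (∫ r in (0:ℝ)..1, f r) ^ 2 ≤ ∫ r in (0:ℝ)..1, f r ^ 2 := by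
  set I := ∫ r in (0:ℝ)..1, f r
  have hf_int : IntervalIntegrable f volume 0 1 := hf.intervalIntegrable_of_Icc zero_le_one
  have hf_sq : IntervalIntegrable (fun r => f r ^ 2) volume 0 1 :=
    (hf.pow 2).intervalIntegrable_of_Icc zero_le_one
  have hvariance : ∫ r in (0:ℝ)..1, (f r - I) ^ 2 = (∫ r in (0:ℝ)..1, f r ^ 2) - I ^ 2 := by
    have hexpand : ∀ r, (f r - I) ^ 2 = f r ^ 2 - (2 * I * f r - I ^ 2) := fun r => by ring
    simp_rw [hexpand]
    rw [integral_sub hf_sq ((hf_int.const_mul _).sub intervalIntegrable_const),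
      integral_sub (hf_int.const_mul _) intervalIntegrable_const,
      intervalIntegral.integral_const_mul, intervalIntegral.integral_const]
    simp only [sub_zero, smul_eq_mul, one_mul]
    ring
  have : 0 ≤ ∫ r in (0:ℝ)..1, (f r - I) ^ 2 :=
    intervalIntegral.integral_nonneg zero_le_one fun r _ => sq_nonneg _
  linarith

theorem abs_sub_volterra_le {f : ℝ → ℝ} {k : ℝ → ℝ → ℝ} {P r : ℝ}
    (hf : ContinuousOn f (Icc 0 1)) (hP : 0 ≤ P) (hr : r ∈ Icc (0:ℝ) 1)
    (hk : ∀ s ∈ Icc r 1, |k r s| ≤ P) :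
    |f r - ∫ s in r..1, k r s * f s| ≤ |f r| + P * ∫ s in (0:ℝ)..1, |f s| := by
  have hPf : IntervalIntegrable (fun s => P * |f s|) volume 0 1 :=
    (hf.abs.intervalIntegrable_of_Icc zero_le_one).const_mul P
  have hvolterra : |∫ s in r..1, k r s * f s| ≤ ∫ s in r..1, P * |f s| := by
    rw [← Real.norm_eq_abs]
    refine norm_integral_le_of_norm_le hr.2 (ae_of_all _ fun s hs => ?_)
      (hPf.mono_set (by simp [uIcc_of_le, hr.1, hr.2, Icc_subset_Icc]))
    rw [Real.norm_eq_abs, abs_mul]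
    exact mul_le_mul_of_nonneg_right (hk s (Ioc_subset_Icc_self hs)) (abs_nonneg _)
  have hshrink : ∫ s in r..1, P * |f s| ≤ P * ∫ s in (0:ℝ)..1, |f s| :=
    (integral_mono_interval hr.1 hr.2 le_rfl
      (ae_of_all _ fun s => mul_nonneg hP (abs_nonneg _)) hPf).trans_eq
      (intervalIntegral.integral_const_mul _ _)
  linarith [abs_sub (f r) (∫ s in r..1, k r s * f s)]

theorem sqrt_integral_sq_sub_volterra_le {f : ℝ → ℝ} {k : ℝ → ℝ → ℝ} {P : ℝ}
    (hf : ContinuousOn f (Icc 0 1)) (hP : 0 ≤ P)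
    (hk : ∀ r ∈ Icc (0:ℝ) 1, ∀ s ∈ Icc r 1, |k r s| ≤ P) :
    √(∫ r in (0:ℝ)..1, (f r - ∫ s in r..1, k r s * f s) ^ 2)
      ≤ (1 + P) * √(∫ r in (0:ℝ)..1, f r ^ 2) := by
  set I := ∫ r in (0:ℝ)..1, |f r|
  set E := ∫ r in (0:ℝ)..1, f r ^ 2
  have hI : 0 ≤ I := intervalIntegral.integral_nonneg zero_le_one fun r _ => abs_nonneg _
  have hIE : I ^ 2 ≤ E := by simpa only [sq_abs] using sq_intervalIntegral_le_integral_sq hf.abs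
  have hf_abs : IntervalIntegrable (fun r => |f r|) volume 0 1 :=
    hf.abs.intervalIntegrable_of_Icc zero_le_one
  have hf_sq : IntervalIntegrable (fun r => f r ^ 2) volume 0 1 :=
    (hf.pow 2).intervalIntegrable_of_Icc zero_le_one
  have hdominant : ∫ r in (0:ℝ)..1, (|f r| + P * I) ^ 2 = E + 2 * P * I ^ 2 + (P * I) ^ 2 := by
    have hexpand : ∀ r, (|f r| + P * I) ^ 2 = f r ^ 2 + (2 * P * I * |f r| + (P * I) ^ 2) :=
      fun r => by rw [add_sq, sq_abs]; ring
    simp_rw [hexpand]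
    rw [integral_add hf_sq ((hf_abs.const_mul _).add intervalIntegrable_const),
      integral_add (hf_abs.const_mul _) intervalIntegrable_const,
      intervalIntegral.integral_const_mul, intervalIntegral.integral_const]
    simp only [sub_zero, smul_eq_mul, one_mul]
    ring
  have hsq : ∫ r in (0:ℝ)..1, (f r - ∫ s in r..1, k r s * f s) ^ 2 ≤ (1 + P) ^ 2 * E := calc
    ∫ r in (0:ℝ)..1, (f r - ∫ s in r..1, k r s * f s) ^ 2
      ≤ ∫ r in (0:ℝ)..1, (|f r| + P * I) ^ 2 := by
        have hdom_int : IntervalIntegrable (fun r => (|f r| + P * I) ^ 2) volume 0 1 :=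
          ((hf.abs.add continuousOn_const).pow 2).intervalIntegrable_of_Icc zero_le_one
        refine (le_abs_self _).trans ?_
        rw [← Real.norm_eq_abs]
        refine intervalIntegral.norm_integral_le_of_norm_le zero_le_one
          (ae_of_all _ fun r hr => ?_) hdom_int
        rw [Real.norm_eq_abs, abs_pow]
        exact pow_le_pow_left₀ (abs_nonneg _)
          (abs_sub_volterra_le hf hP (Ioc_subset_Icc_self hr) (hk r (Ioc_subset_Icc_self hr))) 2
    _ = E + 2 * P * I ^ 2 + (P * I) ^ 2 := hdominant
    _ ≤ (1 + P) ^ 2 * E := by nlinarith [mul_le_mul_of_nonneg_left hIE hP,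
        mul_le_mul_of_nonneg_left hIE (sq_nonneg P)]
  calc √(∫ r in (0:ℝ)..1, (f r - ∫ s in r..1, k r s * f s) ^ 2)
      ≤ √((1 + P) ^ 2 * E) := sqrt_le_sqrt hsq
    _ = (1 + P) * √E := by rw [sqrt_mul (sq_nonneg _), sqrt_sq (by linarith)]

theorem observer_error_L2_exponential_decay_general
    (D Dr Drr : ℝ → ℝ → ℝ)
    (w wr wrr wt : ℝ → ℝ → ℝ)
    (p : ℝ → ℝ → ℝ → ℝ) (ctil : ℝ → ℝ → ℝ)
    (m M Dm μ P : ℝ)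
    -- the triangle T = {(r,s) : 0 ≤ r ≤ s ≤ 1}
    (T : Set (ℝ × ℝ)) (hT : T = {q : ℝ × ℝ | 0 ≤ q.1 ∧ q.1 ≤ q.2 ∧ q.2 ≤ 1})
    -- D is C² in r with jointly continuous derivatives
    (hDr : ∀ t ∈ Ici (0:ℝ), ∀ r ∈ Icc (0:ℝ) 1,
      HasDerivWithinAt (fun x => D x t) (Dr r t) (Icc (0:ℝ) 1) r)
    (hDrr : ∀ t ∈ Ici (0:ℝ), ∀ r ∈ Icc (0:ℝ) 1,
      HasDerivWithinAt (fun x => Dr x t) (Drr r t) (Icc (0:ℝ) 1) r)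
    (hDrrcont : ContinuousOn (fun q : ℝ × ℝ => Drr q.1 q.2) (Icc 0 1 ×ˢ Ici 0))
    -- bounds on the coefficients
    (hm : 0 < m)
    (hDlow : ∀ r ∈ Icc (0:ℝ) 1, ∀ t ∈ Ici (0:ℝ), m ≤ D r t)
    (hDrrbound : ∀ r ∈ Icc (0:ℝ) 1, ∀ t ∈ Ici (0:ℝ), |Drr r t| ≤ M)
    (hDmbound : ∀ t ∈ Ici (0:ℝ), max 0 (-((D 1 t + Dr 1 t) / 2)) ≤ Dm)
    -- choice of μ
    (hμ : μ < -(M / 2 + Dm ^ 2 / m))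
    -- w is a classical solution of the target system
    (hwr : ∀ t ∈ Ici (0:ℝ), ∀ r ∈ Icc (0:ℝ) 1,
      HasDerivWithinAt (fun x => w x t) (wr r t) (Icc (0:ℝ) 1) r)
    (hwrr : ∀ t ∈ Ici (0:ℝ), ∀ r ∈ Icc (0:ℝ) 1,
      HasDerivWithinAt (fun x => wr x t) (wrr r t) (Icc (0:ℝ) 1) r)
    (hwt : ∀ r ∈ Icc (0:ℝ) 1, ∀ t ∈ Ici (0:ℝ),
      HasDerivWithinAt (fun τ => w r τ) (wt r t) (Ici (0:ℝ)) t)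
    (hwcont : ContinuousOn (fun q : ℝ × ℝ => w q.1 q.2) (Icc 0 1 ×ˢ Ici 0))
    (hwrrcont : ContinuousOn (fun q : ℝ × ℝ => wrr q.1 q.2) (Icc 0 1 ×ˢ Ici 0))
    (hwtcont : ContinuousOn (fun q : ℝ × ℝ => wt q.1 q.2) (Icc 0 1 ×ˢ Ici 0))
    (hPDE : ∀ r ∈ Icc (0:ℝ) 1, ∀ t ∈ Ici (0:ℝ),
      wt r t = D r t * wrr r t + μ * w r t)
    (hBC0 : ∀ t ∈ Ici (0:ℝ), w 0 t = 0)
    (hBC1 : ∀ t ∈ Ici (0:ℝ), wr 1 t = -(1/2) * w 1 t)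
    -- the kernel is measurable and bounded by P on the triangle
    (hpbound : ∀ q ∈ T, ∀ t ∈ Ici (0:ℝ), |p q.1 q.2 t| ≤ P)
    -- definition of the transformation
    (hctil : ∀ r t, ctil r t = w r t - ∫ s in r..(1:ℝ), p r s t * w s t) :
    (∀ t ∈ Ici (0:ℝ),
      Real.sqrt (∫ r in (0:ℝ)..1, (ctil r t) ^ 2) ≤
        (1 + P) * Real.exp ((μ + M / 2 + Dm ^ 2 / m) * t) *
          Real.sqrt (∫ r in (0:ℝ)..1, (w r 0) ^ 2)) ∧
    μ + M / 2 + Dm ^ 2 / m < 0 ∧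
    Tendsto (fun t => Real.sqrt (∫ r in (0:ℝ)..1, (ctil r t) ^ 2)) atTop (nhds 0) := by
  have hα : μ + M / 2 + Dm ^ 2 / m < 0 := by linarith
  set α := μ + M / 2 + Dm ^ 2 / m
  have hP : 0 ≤ P := (abs_nonneg _).trans (hpbound (0, 0) (by simp [hT]) 0 self_mem_Ici)
  have henergy : ∀ t > 0, ∫ r in (0:ℝ)..1, w r t * wt r t ≤ α * ∫ r in (0:ℝ)..1, w r t ^ 2 :=
    fun t ht => target_system_energy_estimate (hDr t ht.le) (hDrr t ht.le) (hwr t ht.le)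
      (hwrr t ht.le) (hDrrcont.uncurry_right t ht.le) (hwrrcont.uncurry_right t ht.le) hm
      (fun r hr => hDlow r hr t ht.le) (fun r hr => hDrrbound r hr t ht.le)
      ((le_max_right _ _).trans (hDmbound t ht.le)) (fun r hr => hPDE r hr t ht.le)
      (hBC0 t ht.le) (hBC1 t ht.le)
  have hbound : ∀ t ∈ Ici (0:ℝ), √(∫ r in (0:ℝ)..1, ctil r t ^ 2)
      ≤ (1 + P) * exp (α * t) * √(∫ r in (0:ℝ)..1, w r 0 ^ 2) := fun t ht => by
    simp only [hctil]
    calc _ ≤ (1 + P) * √(∫ r in (0:ℝ)..1, w r t ^ 2) :=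
          sqrt_integral_sq_sub_volterra_le (hwcont.uncurry_right t ht) hP
            fun r hr s hs => hpbound (r, s) (hT ▸ ⟨hr.1, hs.1, hs.2⟩) t ht
      _ ≤ (1 + P) * (exp (α * t) * √(∫ r in (0:ℝ)..1, w r 0 ^ 2)) := by
          gcongr
          exact sqrt_integral_sq_le_exp_mul_of_energy_le hwt hwcont hwtcont henergy ht
      _ = _ := (mul_assoc _ _ _).symm
  have hlim : Tendsto (fun t => (1 + P) * exp (α * t) * √(∫ r in (0:ℝ)..1, w r 0 ^ 2))
      atTop (nhds 0) := by
    simpa using ((tendsto_exp_atBot.comp (tendsto_id.const_mul_atTop_of_neg hα)).const_mul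
      (1 + P)).mul_const (√(∫ r in (0:ℝ)..1, w r 0 ^ 2))
  exact ⟨hbound, hα, squeeze_zero' (.of_forall fun t => sqrt_nonneg _)
    ((eventually_ge_atTop 0).mono hbound) hlim⟩

/-- L² exponential decay of the observer error
`c̃(r,t) = w(r,t) − ∫ᵣ¹ p(r,s,t) w(s,t) ds`, where `w` solves the target system
and the kernel `p` is bounded by `P` on the triangle. -/
theorem observer_error_L2_exponential_decay
    (D Dr Drr : ℝ → ℝ → ℝ)
    (w wr wrr wt : ℝ → ℝ → ℝ)
    (p : ℝ → ℝ → ℝ → ℝ) (ctil : ℝ → ℝ → ℝ)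
    (m M Dm μ P : ℝ)
    -- the triangle T = {(r,s) : 0 ≤ r ≤ s ≤ 1}
    (T : Set (ℝ × ℝ)) (hT : T = {q : ℝ × ℝ | 0 ≤ q.1 ∧ q.1 ≤ q.2 ∧ q.2 ≤ 1})
    -- D is C² in r with jointly continuous derivatives
    (hDr : ∀ t ∈ Ici (0:ℝ), ∀ r ∈ Icc (0:ℝ) 1,
      HasDerivWithinAt (fun x => D x t) (Dr r t) (Icc (0:ℝ) 1) r)
    (hDrr : ∀ t ∈ Ici (0:ℝ), ∀ r ∈ Icc (0:ℝ) 1,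
      HasDerivWithinAt (fun x => Dr x t) (Drr r t) (Icc (0:ℝ) 1) r)
    (hDcont : ContinuousOn (fun q : ℝ × ℝ => D q.1 q.2) (Icc 0 1 ×ˢ Ici 0))
    (hDrcont : ContinuousOn (fun q : ℝ × ℝ => Dr q.1 q.2) (Icc 0 1 ×ˢ Ici 0))
    (hDrrcont : ContinuousOn (fun q : ℝ × ℝ => Drr q.1 q.2) (Icc 0 1 ×ˢ Ici 0))
    -- bounds on the coefficients
    (hm : 0 < m) (hM : 0 ≤ M) (hDm : 0 ≤ Dm)
    (hDlow : ∀ r ∈ Icc (0:ℝ) 1, ∀ t ∈ Ici (0:ℝ), m ≤ D r t)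
    (hDrrbound : ∀ r ∈ Icc (0:ℝ) 1, ∀ t ∈ Ici (0:ℝ), |Drr r t| ≤ M)
    (hDmbound : ∀ t ∈ Ici (0:ℝ), max 0 (-((D 1 t + Dr 1 t) / 2)) ≤ Dm)
    -- choice of μ
    (hμ : μ < -(M / 2 + Dm ^ 2 / m))
    -- w is a classical solution of the target system
    (hwr : ∀ t ∈ Ici (0:ℝ), ∀ r ∈ Icc (0:ℝ) 1,
      HasDerivWithinAt (fun x => w x t) (wr r t) (Icc (0:ℝ) 1) r)
    (hwrr : ∀ t ∈ Ici (0:ℝ), ∀ r ∈ Icc (0:ℝ) 1,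
      HasDerivWithinAt (fun x => wr x t) (wrr r t) (Icc (0:ℝ) 1) r)
    (hwt : ∀ r ∈ Icc (0:ℝ) 1, ∀ t ∈ Ici (0:ℝ),
      HasDerivWithinAt (fun τ => w r τ) (wt r t) (Ici (0:ℝ)) t)
    (hwcont : ContinuousOn (fun q : ℝ × ℝ => w q.1 q.2) (Icc 0 1 ×ˢ Ici 0))
    (hwrcont : ContinuousOn (fun q : ℝ × ℝ => wr q.1 q.2) (Icc 0 1 ×ˢ Ici 0))
    (hwrrcont : ContinuousOn (fun q : ℝ × ℝ => wrr q.1 q.2) (Icc 0 1 ×ˢ Ici 0))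
    (hwtcont : ContinuousOn (fun q : ℝ × ℝ => wt q.1 q.2) (Icc 0 1 ×ˢ Ici 0))
    (hPDE : ∀ r ∈ Icc (0:ℝ) 1, ∀ t ∈ Ici (0:ℝ),
      wt r t = D r t * wrr r t + μ * w r t)
    (hBC0 : ∀ t ∈ Ici (0:ℝ), w 0 t = 0)
    (hBC1 : ∀ t ∈ Ici (0:ℝ), wr 1 t = -(1/2) * w 1 t)
    -- the kernel is measurable and bounded by P on the triangle
    (hpmeas : Measurable (fun q : ℝ × ℝ × ℝ => p q.1 q.2.1 q.2.2))
    (hpbound : ∀ q ∈ T, ∀ t ∈ Ici (0:ℝ), |p q.1 q.2 t| ≤ P)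
    -- definition of the transformation
    (hctil : ∀ r t, ctil r t = w r t - ∫ s in r..(1:ℝ), p r s t * w s t) :
    (∀ t ∈ Ici (0:ℝ),
      Real.sqrt (∫ r in (0:ℝ)..1, (ctil r t) ^ 2) ≤
        (1 + P) * Real.exp ((μ + M / 2 + Dm ^ 2 / m) * t) *
          Real.sqrt (∫ r in (0:ℝ)..1, (w r 0) ^ 2)) ∧
    μ + M / 2 + Dm ^ 2 / m < 0 ∧
    Tendsto (fun t => Real.sqrt (∫ r in (0:ℝ)..1, (ctil r t) ^ 2)) atTop (nhds 0) :=
  observer_error_L2_exponential_decay_general D Dr Drr w wr wrr wt p ctil m M Dm μ P T hT hDr hDrr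
    hDrrcont hm hDlow hDrrbound hDmbound hμ hwr hwrr hwt hwcont hwrrcont hwtcont hPDE hBC0 hBC1
    hpbound hctil
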